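/- Let ≤ be a monomial well-order on FreeMagma E and let I be a two-sided ideal of A. Then the composite of the inclusion Span_ℚ(O(I)) ↪ A with the quotient map A → A/I is an isomorphism of ℚ-vector spaces; in particular A/I is linearly isomorphic to Span_ℚ(O(I)). -/

import Mathlib

/-- The monomial corresponding to an element of the free magma, inside the free
non-unital non-associative algebra. -/
noncomputable def magmaMonomial {E : Type*} (z : FreeMagma E) :
    FreeNonUnitalNonAssocAlgebra ℚ E :=
  MonoidAlgebra.single z (1 : ℚ)

/-- A ℚ-submodule of the magma algebra which is stable under left and right
multiplication by arbitrary elements: a two-sided ideal. -/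
def IsTwoSidedIdealSubmodule {E : Type*}
    (I : Submodule ℚ (FreeNonUnitalNonAssocAlgebra ℚ E)) : Prop :=
  ∀ a x : FreeNonUnitalNonAssocAlgebra ℚ E, x ∈ I → a * x ∈ I ∧ x * a ∈ I

/-- The maximal term `T f` of a nonzero element `f` of the magma algebra: the largest
monomial in its support, with respect to a given linear order on the free magma. -/
noncomputable def maxTerm {E : Type*} [LinearOrder (FreeMagma E)]
    (f : FreeNonUnitalNonAssocAlgebra ℚ E) (hf : f ≠ 0) : FreeMagma E :=
  f.coeff.support.max'
    (Finsupp.support_nonempty_iff.mpr (fun h => hf (MonoidAlgebra.coeff_eq_zero.mp h)))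

/-- `T I`: the set of maximal terms of nonzero elements of `I`. -/
def maxTermSet {E : Type*} [LinearOrder (FreeMagma E)]
    (I : Submodule ℚ (FreeNonUnitalNonAssocAlgebra ℚ E)) : Set (FreeMagma E) :=
  {z | ∃ (f : FreeNonUnitalNonAssocAlgebra ℚ E) (hf : f ≠ 0), f ∈ I ∧ maxTerm f hf = z}

/-- `O I`: the complement of `T I` in the free magma. -/
def outTermSet {E : Type*} [LinearOrder (FreeMagma E)]
    (I : Submodule ℚ (FreeNonUnitalNonAssocAlgebra ℚ E)) : Set (FreeMagma E) :=
  (maxTermSet I)ᶜ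

/-!
Every element `f` of the magma algebra reduces modulo `I` to a combination of monomials of
`O(I)`: if the top monomial `z` of `f` lies in `T(I)`, subtract a multiple of an element of `I`
with top monomial `z`, and otherwise subtract a multiple of `z` itself; either way the top
monomial drops, so the process terminates because the order is well-founded. Conversely a
nonzero element of `Span(O(I)) ∩ I` would have its top monomial both in `O(I)` and in `T(I)`.
Hence `A = Span(O(I)) ⊕ I`.
-/

open MonoidAlgebra

namespace MonoidAlgebra

variable {k M : Type*} [Ring k] [LinearOrder M] [WellFoundedLT M]

theorem eq_top_of_forall_exists_coeff_eq_one {K : Submodule k k[M]}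
    (hK : ∀ z, ∃ g ∈ K, g.coeff z = 1 ∧ ∀ a ∈ g.coeff.support, a ≤ z) : K = ⊤ := by
  suffices bounded : ∀ z (f : k[M]), (∀ a ∈ f.coeff.support, a ≤ z) → f ∈ K by
    refine eq_top_iff.2 fun f _ => ?_
    rcases eq_or_ne f 0 with rfl | hf
    · exact K.zero_mem
    · have hne := Finsupp.support_nonempty_iff.2 (coeff_eq_zero.not.2 hf)
      exact bounded (f.coeff.support.max' hne) f f.coeff.support.le_max'
  intro z
  induction z using WellFoundedLT.induction with
  | _ z ih =>
  intro f hfz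
  obtain ⟨g, hgK, hgz, hg⟩ := hK z
  set r := f - f.coeff z • g
  have hr : ∀ a ∈ r.coeff.support, a < z := by
    intro a ha
    have hle : a ≤ z := by
      rcases Finset.mem_union.1 (Finsupp.support_sub ha) with ha | ha
      · exact hfz a ha
      · exact hg a (Finsupp.support_smul ha)
    refine hle.lt_of_ne ?_
    rintro rfl
    exact Finsupp.mem_support_iff.1 ha (by simp [r, coeff_sub, hgz])
  have hrK : r ∈ K := by
    rcases eq_or_ne r 0 with hr0 | hr0
    · exact hr0 ▸ K.zero_mem
    · have hne := Finsupp.support_nonempty_iff.2 (coeff_eq_zero.not.2 hr0)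
      exact ih _ (hr _ (r.coeff.support.max'_mem hne)) r r.coeff.support.le_max'
  simpa [r] using K.add_mem hrK (K.smul_mem (f.coeff z) hgK)

end MonoidAlgebra

theorem span_magmaMonomial_eq_supported {E : Type*} (S : Set (FreeMagma E)) :
    Submodule.span ℚ (magmaMonomial '' S) = supported ℚ ℚ S := by
  rw [supported_eq_span_single]
  rfl

section

variable {E : Type*} [LinearOrder (FreeMagma E)]

theorem maxTerm_mem_support (f : FreeNonUnitalNonAssocAlgebra ℚ E) (hf : f ≠ 0) :
    maxTerm f hf ∈ f.coeff.support :=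
  Finset.max'_mem _ _

theorem le_maxTerm {f : FreeNonUnitalNonAssocAlgebra ℚ E} (hf : f ≠ 0) {a : FreeMagma E}
    (ha : a ∈ f.coeff.support) : a ≤ maxTerm f hf :=
  Finset.le_max' _ a ha

theorem disjoint_supported_outTermSet (I : Submodule ℚ (FreeNonUnitalNonAssocAlgebra ℚ E)) :
    Disjoint (supported ℚ ℚ (outTermSet I)) I := by
  refine Submodule.disjoint_def.2 fun f hfO hfI => ?_
  by_contra hf
  exact hfO (maxTerm_mem_support f hf) ⟨f, hf, hfI, rfl⟩

theorem exists_mem_supported_outTermSet_sup_coeff_eq_one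
    (I : Submodule ℚ (FreeNonUnitalNonAssocAlgebra ℚ E)) (z : FreeMagma E) :
    ∃ g ∈ supported ℚ ℚ (outTermSet I) ⊔ I, g.coeff z = 1 ∧ ∀ a ∈ g.coeff.support, a ≤ z := by
  by_cases hz : z ∈ maxTermSet I
  · obtain ⟨g, hg, hgI, rfl⟩ := hz
    have hlead : g.coeff (maxTerm g hg) ≠ 0 :=
      Finsupp.mem_support_iff.1 (maxTerm_mem_support g hg)
    refine ⟨(g.coeff (maxTerm g hg))⁻¹ • g, Submodule.mem_sup_right (I.smul_mem _ hgI), ?_,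
      fun a ha => le_maxTerm hg (Finsupp.support_smul ha)⟩
    rw [coeff_smul_apply, smul_eq_mul, inv_mul_cancel₀ hlead]
  · refine ⟨magmaMonomial z, Submodule.mem_sup_left ?_, Finsupp.single_eq_same, fun a ha => ?_⟩
    · rw [← span_magmaMonomial_eq_supported]
      exact Submodule.subset_span ⟨z, hz, rfl⟩
    · rw [Finset.mem_singleton.1 (Finsupp.support_single_subset ha)]

theorem isCompl_supported_outTermSet [WellFoundedLT (FreeMagma E)]
    (I : Submodule ℚ (FreeNonUnitalNonAssocAlgebra ℚ E)) :
    IsCompl (supported ℚ ℚ (outTermSet I)) I :=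
  ⟨disjoint_supported_outTermSet I, codisjoint_iff.2 <|
    eq_top_of_forall_exists_coeff_eq_one (exists_mem_supported_outTermSet_sup_coeff_eq_one I)⟩

end

theorem span_outTerms_linearEquiv_quotient_general (E : Type*) [LinearOrder (FreeMagma E)]
    (hwell : ∀ S : Set (FreeMagma E), S.Nonempty → ∃ m ∈ S, ∀ x ∈ S, m ≤ x)
    (I : Submodule ℚ (FreeNonUnitalNonAssocAlgebra ℚ E)) :
    Function.Bijective
      (I.mkQ.comp (Submodule.span ℚ (magmaMonomial '' outTermSet I)).subtype) := by
  have : WellFoundedLT (FreeMagma E) := ⟨WellFounded.wellFounded_iff_has_min.2 fun S hS =>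
    let ⟨m, hm, hmin⟩ := hwell S hS
    ⟨m, hm, fun x hx => (hmin x hx).not_gt⟩⟩
  rw [span_magmaMonomial_eq_supported]
  exact (I.quotientEquivOfIsCompl _ (isCompl_supported_outTermSet I).symm).symm.bijective

/-- For a monomial well-order on the free magma and a two-sided ideal `I` of the magma
algebra `A`, the composite of the inclusion of the span of the monomials in `O(I)` with
the quotient map `A → A/I` is a linear isomorphism; in particular `A/I` is linearly
isomorphic to `Span(O(I))`. -/
theorem span_outTerms_linearEquiv_quotient (E : Type*) [LinearOrder (FreeMagma E)]
    (hmono : ∀ x y z : FreeMagma E, x < y → x * z < y * z ∧ z * x < z * y)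
    (hwell : ∀ S : Set (FreeMagma E), S.Nonempty → ∃ m ∈ S, ∀ x ∈ S, m ≤ x)
    (I : Submodule ℚ (FreeNonUnitalNonAssocAlgebra ℚ E))
    (hI : IsTwoSidedIdealSubmodule I) :
    Function.Bijective
      (I.mkQ.comp (Submodule.span ℚ (magmaMonomial '' outTermSet I)).subtype) :=
  span_outTerms_linearEquiv_quotient_general E hwell I
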